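/- Isometry of the SAFT Zak transform: for every f ∈ L¹(ℝ) ∩ L²(ℝ), ∫_0^1 ∫_0^Δ |Z_A f(t, ω)|² dω dt = ∫_ℝ |f(t)|² dt, i.e. ‖Z_A f‖²_{L²([0,1]×[0,Δ])} = ‖f‖²_{L²(ℝ)}. -/

import Mathlib

/-!
For fixed `t`, the SAFT Zak transform `Z_A f(t, ·)` is, up to the factor `Δ^(-1/2)` and a
unimodular chirp in `ω`, a `Δ`-periodic Fourier series whose `k`-th coefficient has modulus
`‖f (t + k)‖`. Parseval's identity on `[0, Δ]` turns `∫ ‖Z_A f(t, ω)‖² dω` into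
`∑ₖ ‖f (t + k)‖²`, and integrating this periodization of `‖f‖²` over `t ∈ [0, 1]` gives back
`∫ ‖f‖²`. Integrability of `f` makes `k ↦ f (t + k)` absolutely summable for almost every `t`,
which is what makes the Fourier series converge absolutely.
-/

open MeasureTheory Real

/-- The SAFT Zak transform of `f : ℝ → ℂ`, with `Ω = 2*(b*q - d*p)`. -/
noncomputable def saftZak (a b d p q : ℝ) (f : ℝ → ℂ) (t ω : ℝ) : ℂ :=
  (Real.sqrt (2 * π * b) : ℂ)⁻¹ *
    ∑' k : ℤ, f (t + (k : ℝ)) * Complex.exp (Complex.I / (2 * b) *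
      ((d * ω ^ 2 + a * (k : ℝ) ^ 2 - 2 * (k : ℝ) * ω + 2 * (b * q - d * p) * ω
        + 2 * p * (k : ℝ) : ℝ) : ℂ))

theorem intervalIntegral.hasSum_integral_of_norm_le {ι E : Type*} [Countable ι]
    [NormedAddCommGroup E] [NormedSpace ℝ E] [CompleteSpace E] {F : ι → ℝ → E} {u : ι → ℝ}
    {a b : ℝ} (hF : ∀ k, Continuous (F k)) (hu : Summable u) (hFu : ∀ k x, ‖F k x‖ ≤ u k) :
    HasSum (fun k => ∫ x in a..b, F k x) (∫ x in a..b, ∑' k, F k x) :=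
  hasSum_integral_of_dominated_convergence (fun k _ => u k)
    (fun k => (hF k).aestronglyMeasurable) (fun k => ae_of_all _ fun x _ => hFu k x)
    (ae_of_all _ fun _ _ => hu) intervalIntegrable_const
    (ae_of_all _ fun x _ => (hu.of_norm_bounded (hFu · x)).hasSum)

theorem Complex.norm_mul_exp_ofReal_mul_I (z : ℂ) (x : ℝ) :
    ‖z * Complex.exp (x * Complex.I)‖ = ‖z‖ := by
  rw [norm_mul, Complex.norm_exp_ofReal_mul_I, mul_one]

section Periodization

variable {E : Type*} [NormedAddCommGroup E]

theorem ae_summable_norm_of_summable_integral_norm {α ι : Type*} [MeasurableSpace α]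
    {μ : Measure α} [Countable ι] {F : ι → α → E} (hF : ∀ k, Integrable (F k) μ)
    (hsum : Summable fun k => ∫ x, ‖F k x‖ ∂μ) :
    ∀ᵐ x ∂μ, Summable fun k => ‖F k x‖ := by
  refine summable_norm_of_tsum_eLpNorm_ne_top le_rfl (fun k => (hF k).aestronglyMeasurable) ?_
  simp_rw [eLpNorm_one_eq_lintegral_enorm, ← ofReal_integral_norm_eq_lintegral_enorm (hF _),
    ← ENNReal.ofReal_tsum_of_nonneg (fun k => integral_nonneg fun x => norm_nonneg _) hsum]
  exact ENNReal.ofReal_ne_top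

theorem MeasureTheory.Integrable.hasSum_setIntegral_Ioc_comp_add_int [NormedSpace ℝ E]
    {f : ℝ → E} (hf : Integrable f) :
    HasSum (fun k : ℤ => ∫ t in Set.Ioc (0 : ℝ) 1, f (t + k)) (∫ t, f t) := by
  simpa only [intervalIntegral.integral_of_le zero_le_one] using
    hf.hasSum_intervalIntegral_comp_add_int

theorem MeasureTheory.Integrable.ae_summable_norm_comp_add_int {f : ℝ → E} (hf : Integrable f) :
    ∀ᵐ t, t ∈ Set.Ioc (0 : ℝ) 1 → Summable fun k : ℤ => ‖f (t + k)‖ := by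
  rw [← ae_restrict_iff' measurableSet_Ioc]
  exact ae_summable_norm_of_summable_integral_norm
    (fun k : ℤ => (hf.comp_add_right (k : ℝ)).integrableOn)
    hf.norm.hasSum_setIntegral_Ioc_comp_add_int.summable

theorem MeasureTheory.Integrable.intervalIntegral_tsum_comp_add_int [NormedSpace ℝ E]
    [CompleteSpace E] {f : ℝ → E} (hf : Integrable f) :
    ∫ t in (0 : ℝ)..1, ∑' k : ℤ, f (t + k) = ∫ t, f t := by
  rw [intervalIntegral.integral_of_le zero_le_one, ← integral_tsum_of_summable_integral_norm
    (fun k : ℤ => (hf.comp_add_right (k : ℝ)).integrableOn)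
    hf.norm.hasSum_setIntegral_Ioc_comp_add_int.summable]
  exact hf.hasSum_setIntegral_Ioc_comp_add_int.tsum_eq

end Periodization

section FourierSeries

open Complex ComplexConjugate

variable {b : ℝ}

theorem integral_exp_int_mul_div_mul_I (hb : b ≠ 0) (n : ℤ) :
    ∫ ω in (0 : ℝ)..2 * π * b, exp (↑(n * ω / b) * I) = if n = 0 then ↑(2 * π * b) else 0 := by
  split_ifs with hn
  · simp [hn]
  have hc : (n / b * I : ℂ) ≠ 0 := by simp [hn, hb, I_ne_zero]
  have hexp : ∀ ω : ℝ, exp (↑(n * ω / b) * I) = exp ((n / b * I : ℂ) * ω) := fun ω => by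
    push_cast; ring_nf
  have hperiod : (n / b * I : ℂ) * ↑(2 * π * b) = n * (2 * π * I) := by
    have : (b : ℂ) ≠ 0 := ofReal_ne_zero.mpr hb
    push_cast; field_simp
  simp_rw [hexp, integral_exp_mul_complex hc, hperiod, exp_int_mul_two_pi_mul_I]
  simp

theorem integral_tsum_mul_exp_mul_exp (hb : b ≠ 0) {c : ℤ → ℂ} (hc : Summable fun k => ‖c k‖)
    (j : ℤ) :
    ∫ ω in (0 : ℝ)..2 * π * b,
        (∑' k : ℤ, c k * exp (↑(-(k * ω / b)) * I)) * exp (↑(j * ω / b) * I) =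
      ↑(2 * π * b) * c j := by
  have hterm : ∀ (k : ℤ) (ω : ℝ), c k * exp (↑(-(k * ω / b)) * I) * exp (↑(j * ω / b) * I) =
      c k * exp (↑((j - k : ℤ) * ω / b) * I) := fun k ω => by
    rw [mul_assoc, ← Complex.exp_add]
    push_cast
    ring_nf
  simp_rw [← tsum_mul_right]
  rw [← (intervalIntegral.hasSum_integral_of_norm_le (u := fun k => ‖c k‖) (fun k => by fun_prop)
    hc fun k ω => by rw [norm_mul_exp_ofReal_mul_I, norm_mul_exp_ofReal_mul_I]).tsum_eq]
  simp_rw [hterm, intervalIntegral.integral_const_mul, integral_exp_int_mul_div_mul_I hb,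
    sub_eq_zero, mul_ite, mul_zero]
  simp [mul_comm]

theorem integral_norm_sq_tsum_mul_exp (hb : b ≠ 0) {c : ℤ → ℂ} (hc : Summable fun k => ‖c k‖) :
    ∫ ω in (0 : ℝ)..2 * π * b, ‖∑' k : ℤ, c k * exp (↑(-(k * ω / b)) * I)‖ ^ 2 =
      2 * π * b * ∑' k : ℤ, ‖c k‖ ^ 2 := by
  set S : ℝ → ℂ := fun ω => ∑' k : ℤ, c k * exp (↑(-(k * ω / b)) * I)
  have hS : ∀ ω, ‖S ω‖ ≤ ∑' k, ‖c k‖ := fun ω =>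
    (norm_tsum_le_tsum_norm (hc.congr fun k => (norm_mul_exp_ofReal_mul_I _ _).symm)).trans_eq
      (tsum_congr fun k => norm_mul_exp_ofReal_mul_I _ _)
  have hS_cont : Continuous S :=
    continuous_tsum (fun k => by fun_prop) hc fun k ω => (norm_mul_exp_ofReal_mul_I _ _).le
  have hexpand : ∀ ω, ((‖S ω‖ ^ 2 : ℝ) : ℂ) =
      ∑' j : ℤ, conj (c j) * (S ω * exp (↑(j * ω / b) * I)) := fun ω => by
    rw [ofReal_pow, ← mul_conj', conj_tsum, ← tsum_mul_left]
    refine tsum_congr fun j => ?_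
    rw [map_mul, ← exp_conj, map_mul, conj_ofReal, conj_I]
    push_cast
    ring_nf
  have hcoeff : ∀ j : ℤ,
      ∫ ω in (0 : ℝ)..2 * π * b, conj (c j) * (S ω * exp (↑(j * ω / b) * I)) =
        ((2 * π * b * ‖c j‖ ^ 2 : ℝ) : ℂ) := fun j => by
    rw [intervalIntegral.integral_const_mul, integral_tsum_mul_exp_mul_exp hb hc, mul_left_comm,
      conj_mul']
    push_cast
    ring
  have hsum := intervalIntegral.hasSum_integral_of_norm_le (a := 0) (b := 2 * π * b)
    (F := fun j ω => conj (c j) * (S ω * exp (↑(j * ω / b) * I)))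
    (u := fun j => ‖c j‖ * ∑' k, ‖c k‖) (fun j => by fun_prop) (hc.mul_right _) fun j ω => by
      simpa only [norm_mul, RCLike.norm_conj, norm_exp_ofReal_mul_I, mul_one] using
        mul_le_mul_of_nonneg_left (hS ω) (norm_nonneg _)
  simp_rw [hcoeff, ← hexpand, intervalIntegral.integral_ofReal] at hsum
  rw [← tsum_mul_left]
  exact_mod_cast hsum.tsum_eq.symm

end FourierSeries

section SaftZak

open Complex

theorem saftZak_eq (a b d p q : ℝ) (f : ℝ → ℂ) (t ω : ℝ) :
    saftZak a b d p q f t ω = (√(2 * π * b) : ℂ)⁻¹ *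
      (exp (((d * ω ^ 2 + 2 * (b * q - d * p) * ω) / (2 * b) : ℝ) * I) *
        ∑' k : ℤ, f (t + k) * exp (((a * k ^ 2 + 2 * p * k) / (2 * b) : ℝ) * I) *
          exp (↑(-(k * ω / b)) * I)) := by
  rw [saftZak]
  congr 1
  rw [← tsum_mul_left]
  refine tsum_congr fun k => ?_
  conv_rhs => rw [mul_left_comm, mul_assoc, ← Complex.exp_add, ← Complex.exp_add]
  congr 2
  push_cast
  ring

theorem integral_norm_sq_saftZak (a b d p q : ℝ) (hb : 0 < b) (f : ℝ → ℂ) (t : ℝ)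
    (hf : Summable fun k : ℤ => ‖f (t + k)‖) :
    ∫ ω in (0 : ℝ)..2 * π * b, ‖saftZak a b d p q f t ω‖ ^ 2 = ∑' k : ℤ, ‖f (t + k)‖ ^ 2 := by
  have hΔ : 0 < 2 * π * b := by positivity
  simp_rw [saftZak_eq, norm_mul, norm_exp_ofReal_mul_I, one_mul, norm_inv, norm_real,
    norm_of_nonneg (sqrt_nonneg _), mul_pow, inv_pow, sq_sqrt hΔ.le,
    intervalIntegral.integral_const_mul]
  rw [integral_norm_sq_tsum_mul_exp hb.ne'
    (hf.congr fun k => (norm_mul_exp_ofReal_mul_I _ _).symm)]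
  simp_rw [norm_mul_exp_ofReal_mul_I]
  field_simp

end SaftZak

theorem saftZak_isometry_general (a b d p q : ℝ) (hb : 0 < b)
    (f : ℝ → ℂ) (hf1 : Integrable f) (hf2 : MemLp f 2 volume) :
    (∫ t in (0:ℝ)..1, ∫ ω in (0:ℝ)..(2 * π * b), ‖saftZak a b d p q f t ω‖ ^ 2) =
      ∫ t : ℝ, ‖f t‖ ^ 2 := by
  have hf_sq : Integrable fun t => ‖f t‖ ^ 2 := hf2.integrable_norm_pow two_ne_zero
  rw [← hf_sq.intervalIntegral_tsum_comp_add_int]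
  refine intervalIntegral.integral_congr_ae ?_
  filter_upwards [hf1.ae_summable_norm_comp_add_int] with t hsum ht
  rw [Set.uIoc_of_le zero_le_one] at ht
  exact integral_norm_sq_saftZak a b d p q hb f t (hsum ht)

/-- Isometry of the SAFT Zak transform from `L²(ℝ)` to `L²([0,1] × [0,Δ])`, `Δ = 2πb`. -/
theorem saftZak_isometry (a b c d p q : ℝ) (hb : 0 < b) (habcd : a * d - b * c = 1)
    (f : ℝ → ℂ) (hf1 : Integrable f) (hf2 : MemLp f 2 volume) :
    (∫ t in (0:ℝ)..1, ∫ ω in (0:ℝ)..(2 * π * b), ‖saftZak a b d p q f t ω‖ ^ 2) =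
      ∫ t : ℝ, ‖f t‖ ^ 2 :=
  saftZak_isometry_general a b d p q hb f hf1 hf2
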